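/- arXiv:2508.21441 — 11 statements merged into one kernel-verified Lean document; each statement's English description precedes it below -/
import Mathlib

section
/- Let κ and κ' be OCFs over the same finite signature Σ. Then every conditional accepted by κ' is also accepted by κ if and only if for all worlds ω₁, ω₂ ∈ Ω_Σ, κ(ω₁) ≤ κ(ω₂) implies κ'(ω₁) ≤ κ'(ω₂). Consequently, κ and κ' accept exactly the same conditionals if and only if for all worlds ω₁, ω₂ ∈ Ω_Σ, κ(ω₁) ≤ κ(ω₂) ⟺ κ'(ω₁) ≤ κ'(ω₂). -/
/-- Possible worlds over a signature `σ`. -/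
abbrev World (σ : Type*) := σ → Bool

/-- The rank of a proposition `A` under the ranking function `κ`:
the minimum of `κ` over `A`, with `⊤` for the empty set. -/
noncomputable def rank {α : Type*} (κ : α → ℕ) (A : Set α) : ℕ∞ :=
  ⨅ ω ∈ A, (κ ω : ℕ∞)

/-- `κ` accepts the conditional `(B|A)` iff `κ(A ∩ B) < κ(A ∩ Bᶜ)`. -/
def acceptsCond {α : Type*} (κ : α → ℕ) (A B : Set α) : Prop :=
  rank κ (A ∩ B) < rank κ (A ∩ Bᶜ)

lemma rank_le_mem {α : Type*} (κ : α → ℕ) {A : Set α} {ω : α} (h : ω ∈ A) :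
    rank κ A ≤ (κ ω : ℕ∞) := by
  exact iInf₂_le ω h

lemma rank_exists_min {α : Type*} (κ : α → ℕ) {A : Set α} (hfin : A.Finite)
    (h : A.Nonempty) : ∃ ω ∈ A, rank κ A = (κ ω : ℕ∞) := by
  obtain ⟨ω, hω, hmin⟩ := Set.exists_min_image A κ hfin h
  refine ⟨ω, hω, le_antisymm (rank_le_mem κ hω) ?_⟩
  refine le_iInf₂ fun ω' h' => ?_
  exact_mod_cast hmin ω' h'

lemma rank_singleton {α : Type*} (κ : α → ℕ) (ω : α) :
    rank κ {ω} = (κ ω : ℕ∞) := by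
  simp [rank]

lemma rank_nonempty_of_lt {α : Type*} (κ : α → ℕ) {A : Set α} {x : ℕ∞}
    (h : rank κ A < x) : A.Nonempty := by
  by_contra hne
  rw [Set.not_nonempty_iff_eq_empty] at hne
  subst hne
  simp [rank] at h

lemma acceptsCond_mono {σ : Type*} [Fintype σ]
    (κ κ' : World σ → ℕ)
    (h : ∀ ω₁ ω₂ : World σ, κ ω₁ ≤ κ ω₂ → κ' ω₁ ≤ κ' ω₂)
    {A B : Set (World σ)} (hacc : acceptsCond κ' A B) : acceptsCond κ A B := by
  unfold acceptsCond at *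
  have hne : (A ∩ B).Nonempty := rank_nonempty_of_lt κ' hacc
  obtain ⟨ω₁', hω₁', hr'⟩ := rank_exists_min κ' (Set.toFinite _) hne
  obtain ⟨ω₁, hω₁, hr⟩ := rank_exists_min κ (Set.toFinite _) hne
  rw [hr]
  have main : ∀ ω₂ ∈ A ∩ Bᶜ, κ ω₁ < κ ω₂ := by
    intro ω₂ h₂
    by_contra hle
    push_neg at hle
    have h1 : κ ω₁ ≤ κ ω₁' := by
      have := rank_le_mem κ hω₁'
      rw [hr] at this
      exact_mod_cast this
    have h2' : κ' ω₂ ≤ κ' ω₁' := h ω₂ ω₁' (hle.trans h1)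
    have := hacc.trans_le (rank_le_mem κ' h₂)
    rw [hr'] at this
    exact absurd h2' (not_le.mpr (by exact_mod_cast this))
  rcases Set.eq_empty_or_nonempty (A ∩ Bᶜ) with he | hne2
  · rw [he]
    simp [rank]
  · obtain ⟨ω₂, hω₂, hr₂⟩ := rank_exists_min κ (Set.toFinite _) hne2
    rw [hr₂]
    exact_mod_cast main ω₂ hω₂

/-- Every conditional accepted by `κ'` is accepted by `κ` iff `κ(ω₁) ≤ κ(ω₂)`
implies `κ'(ω₁) ≤ κ'(ω₂)`; and `κ`, `κ'` accept exactly the same conditionals iff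
`κ(ω₁) ≤ κ(ω₂) ⟺ κ'(ω₁) ≤ κ'(ω₂)` for all worlds. -/
theorem stmt0 {σ : Type*} [Fintype σ] [Nonempty σ]
    (κ κ' : World σ → ℕ) (hκ : ∃ ω, κ ω = 0) (hκ' : ∃ ω, κ' ω = 0) :
    ((∀ A B : Set (World σ), acceptsCond κ' A B → acceptsCond κ A B) ↔
      (∀ ω₁ ω₂ : World σ, κ ω₁ ≤ κ ω₂ → κ' ω₁ ≤ κ' ω₂)) ∧
    ((∀ A B : Set (World σ), acceptsCond κ A B ↔ acceptsCond κ' A B) ↔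
      (∀ ω₁ ω₂ : World σ, κ ω₁ ≤ κ ω₂ ↔ κ' ω₁ ≤ κ' ω₂)) := by
  have key : ∀ (f g : World σ → ℕ),
      (∀ A B : Set (World σ), acceptsCond g A B → acceptsCond f A B) ↔
      (∀ ω₁ ω₂ : World σ, f ω₁ ≤ f ω₂ → g ω₁ ≤ g ω₂) := by
    intro f g
    constructor
    · intro hacc ω₁ ω₂ hle
      by_contra hlt
      push_neg at hlt
      have hne : ω₁ ≠ ω₂ := fun h => by subst h; exact lt_irrefl _ hlt
      have h := hacc ({ω₁, ω₂}) ({ω₂}) ?_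
      · unfold acceptsCond at h
        have e1 : ({ω₁, ω₂} ∩ {ω₂} : Set (World σ)) = {ω₂} := by
          ext x; simp
        have e2 : ({ω₁, ω₂} ∩ {ω₂}ᶜ : Set (World σ)) = {ω₁} := by
          ext x; simp; constructor
          · rintro ⟨h1 | h1, h2⟩ <;> tauto
          · rintro rfl; exact ⟨Or.inl rfl, hne⟩
        rw [e1, e2, rank_singleton, rank_singleton] at h
        exact absurd hle (not_le.mpr (by exact_mod_cast h))
      · unfold acceptsCond
        have e1 : ({ω₁, ω₂} ∩ {ω₂} : Set (World σ)) = {ω₂} := by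
          ext x; simp
        have e2 : ({ω₁, ω₂} ∩ {ω₂}ᶜ : Set (World σ)) = {ω₁} := by
          ext x; simp; constructor
          · rintro ⟨h1 | h1, h2⟩ <;> tauto
          · rintro rfl; exact ⟨Or.inl rfl, hne⟩
        rw [e1, e2, rank_singleton, rank_singleton]
        exact_mod_cast hlt
    · intro h A B
      exact acceptsCond_mono f g h
  constructor
  · exact key κ κ'
  · constructor
    · intro h ω₁ ω₂
      constructor
      · exact (key κ κ').mp (fun A B => (h A B).mpr) ω₁ ω₂
      · exact (key κ' κ).mp (fun A B => (h A B).mp) ω₁ ω₂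
    · intro h A B
      constructor
      · exact (key κ' κ).mpr (fun ω₁ ω₂ => (h ω₁ ω₂).mpr) A B
      · exact (key κ κ').mpr (fun ω₁ ω₂ => (h ω₁ ω₂).mp) A B
end

section
/- Let κ₁ ≅ κ₂ be two equivalent OCFs over Σ and let A ⊆ Ω_Σ be a nonempty proposition. Then for every world ω ∈ A, κ₁(ω) = κ₁(A) if and only if κ₂(ω) = κ₂(A) (that is, ω is a minimal model of A with respect to κ₁ iff it is a minimal model of A with respect to κ₂). In particular, κ₁⁻¹(0) = κ₂⁻¹(0). -/
lemma rank_singleton_inter {α : Type*} (κ : α → ℕ) (A : Set α) (ω : α) (hω : ω ∈ A) :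
    rank κ (A ∩ {ω}) = (κ ω : ℕ∞) := by
  have h : A ∩ {ω} = ({ω} : Set α) :=
    Set.inter_eq_self_of_subset_right (Set.singleton_subset_iff.mpr hω)
  simp [rank, h]

lemma key_iff {α : Type*} (κ : α → ℕ) (A : Set α) (ω : α) (hω : ω ∈ A) :
    ((κ ω : ℕ∞) = rank κ A) ↔ ¬ acceptsCond κ A {ω}ᶜ := by
  have hrank : rank κ (A ∩ ({ω}ᶜ)ᶜ) = (κ ω : ℕ∞) := by
    rw [compl_compl]; exact rank_singleton_inter κ A ω hω
  have hle : rank κ A ≤ (κ ω : ℕ∞) := biInf_le _ hω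
  rw [acceptsCond, hrank, not_lt]
  constructor
  · intro h
    rw [h]
    exact le_iInf₂ fun x hx => biInf_le _ hx.1
  · intro h
    refine le_antisymm ?_ hle
    refine le_iInf₂ fun x hx => ?_
    by_cases hxω : x = ω
    · subst hxω; exact le_rfl
    · exact h.trans (biInf_le _ ⟨hx, hxω⟩)

/-- For equivalent OCFs `κ₁ ≅ κ₂` and a nonempty proposition `A`, a world
`ω ∈ A` is a minimal model of `A` w.r.t. `κ₁` iff it is so w.r.t. `κ₂`;
in particular `κ₁⁻¹(0) = κ₂⁻¹(0)`. -/
theorem stmt1 {σ : Type*} [Fintype σ] [Nonempty σ]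
    (κ₁ κ₂ : World σ → ℕ) (h₁ : ∃ ω, κ₁ ω = 0) (h₂ : ∃ ω, κ₂ ω = 0)
    (hequiv : ∀ A B : Set (World σ), acceptsCond κ₁ A B ↔ acceptsCond κ₂ A B)
    (A : Set (World σ)) (hA : A.Nonempty) :
    (∀ ω ∈ A, ((κ₁ ω : ℕ∞) = rank κ₁ A ↔ (κ₂ ω : ℕ∞) = rank κ₂ A)) ∧
    κ₁ ⁻¹' {0} = κ₂ ⁻¹' {0} := by
  have main : ∀ (B : Set (World σ)), ∀ ω ∈ B,
      ((κ₁ ω : ℕ∞) = rank κ₁ B ↔ (κ₂ ω : ℕ∞) = rank κ₂ B) := by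
    intro B ω hω
    rw [key_iff κ₁ B ω hω, key_iff κ₂ B ω hω, hequiv]
  refine ⟨main A, ?_⟩
  have hr : ∀ (κ : World σ → ℕ), (∃ ω, κ ω = 0) → rank κ Set.univ = 0 := by
    rintro κ ⟨ω₀, hω₀⟩
    refine le_antisymm ?_ zero_le
    have h' : rank κ Set.univ ≤ (κ ω₀ : ℕ∞) := biInf_le _ (Set.mem_univ ω₀)
    simpa [hω₀] using h'
  ext ω
  have := main Set.univ ω (Set.mem_univ ω)
  rw [hr κ₁ h₁, hr κ₂ h₂] at this
  simp only [Nat.cast_eq_zero] at this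
  simpa using this
end

section
/- For every OCF κ over Σ and every subset Σ' ⊆ Σ, the most plausible worlds of the marginalization are exactly the restrictions of the most plausible worlds of κ: (κ↓Σ')⁻¹(0) = π(κ⁻¹(0)). Consequently, for every proposition A' ⊆ Ω_{Σ'}, (κ↓Σ')⁻¹(0) ⊆ A' if and only if κ⁻¹(0) ⊆ π⁻¹(A') (the marginalized OCF believes A' iff κ believes the cylinder of A'), i.e., beliefs commute with marginalization. -/
/-- Restriction of a world over `σ` to the subsignature `σ'`. -/
def restrict {σ : Type*} (σ' : Set σ) (ω : World σ) : World σ' := fun a => ω a.val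

/-- Marginalization of an OCF `κ` over `σ` to the subsignature `σ'`:
`κ↓σ'(ω') = min {κ ω : ω restricts to ω'}`. -/
noncomputable def marg {σ : Type*} (κ : World σ → ℕ) (σ' : Set σ) : World σ' → ℕ :=
  fun ω' => sInf (κ '' {ω | restrict σ' ω = ω'})

lemma marg_zero_iff {σ : Type*} (κ : World σ → ℕ) (σ' : Set σ) (ω' : World σ') :
    marg κ σ' ω' = 0 ↔ ∃ ω, restrict σ' ω = ω' ∧ κ ω = 0 := by
  classical
  have hne : (κ '' {ω | restrict σ' ω = ω'}).Nonempty := by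
    refine ⟨κ (fun a => if ha : a ∈ σ' then ω' ⟨a, ha⟩ else false), ⟨_, ?_, rfl⟩⟩
    funext a; simp [restrict, a.2]
  rw [marg, Nat.sInf_eq_zero]
  constructor
  · rintro (⟨ω, hω, hκ⟩ | he)
    · exact ⟨ω, hω, hκ⟩
    · exact absurd he (Set.nonempty_iff_ne_empty.mp hne)
  · rintro ⟨ω, hω, hκ⟩; exact Or.inl ⟨ω, hω, hκ⟩

/-- The most plausible worlds of the marginalization are exactly the restrictions
of the most plausible worlds of `κ`; consequently the marginalized OCF believes
`A'` iff `κ` believes the cylinder of `A'`. -/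
theorem stmt3 {σ : Type*} [Fintype σ] [Nonempty σ]
    (κ : World σ → ℕ) (h : ∃ ω, κ ω = 0) (σ' : Set σ) :
    (marg κ σ') ⁻¹' {0} = restrict σ' '' (κ ⁻¹' {0}) ∧
    (∀ A' : Set (World σ'),
      (marg κ σ') ⁻¹' {0} ⊆ A' ↔ κ ⁻¹' {0} ⊆ restrict σ' ⁻¹' A') := by
  have heq : (marg κ σ') ⁻¹' {0} = restrict σ' '' (κ ⁻¹' {0}) := by
    ext ω'
    simp only [Set.mem_preimage, Set.mem_singleton_iff, Set.mem_image, marg_zero_iff]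
    tauto
  refine ⟨heq, fun A' => ?_⟩
  rw [heq, Set.image_subset_iff]
end

section
/- If κ₁ ≅ κ₂ are equivalent OCFs over Σ and Σ' ⊆ Σ, then the marginalizations are equivalent: κ₁↓Σ' ≅ κ₂↓Σ' (they accept exactly the same conditionals over propositions of Ω_{Σ'}). -/
lemma rank_marg {σ : Type*} (κ : World σ → ℕ) (σ' : Set σ) (A' : Set (World σ')) :
    rank (marg κ σ') A' = rank κ (restrict σ' ⁻¹' A') := by
  unfold rank
  apply le_antisymm
  · refine le_iInf₂ fun ω hω => ?_
    calc (⨅ ω' ∈ A', (marg κ σ' ω' : ℕ∞)) ≤ (marg κ σ' (restrict σ' ω) : ℕ∞) :=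
        biInf_le _ hω
      _ ≤ (κ ω : ℕ∞) := by
        exact_mod_cast Nat.sInf_le (Set.mem_image_of_mem κ (rfl : restrict σ' ω = _))
  · refine le_iInf₂ fun ω' hω' => ?_
    classical
    have hne : (κ '' {ω | restrict σ' ω = ω'}).Nonempty := by
      refine ⟨κ (fun a => if h : a ∈ σ' then ω' ⟨a, h⟩ else false), _, ?_, rfl⟩
      show restrict σ' _ = ω'
      funext a
      simp [restrict, a.2]
    obtain ⟨ω, hω, hκω⟩ := Nat.sInf_mem hne
    have hmem : ω ∈ restrict σ' ⁻¹' A' := by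
      show restrict σ' ω ∈ A'
      rw [Set.mem_setOf_eq] at hω
      rwa [hω]
    have : (marg κ σ' ω' : ℕ∞) = (κ ω : ℕ∞) := by
      rw [show marg κ σ' ω' = κ ω from hκω.symm]
    rw [this]
    exact biInf_le _ hmem

/-- Equivalent OCFs have equivalent marginalizations. -/
theorem stmt4 {σ : Type*} [Fintype σ] [Nonempty σ]
    (κ₁ κ₂ : World σ → ℕ) (h₁ : ∃ ω, κ₁ ω = 0) (h₂ : ∃ ω, κ₂ ω = 0)
    (σ' : Set σ)
    (hequiv : ∀ A B : Set (World σ), acceptsCond κ₁ A B ↔ acceptsCond κ₂ A B) :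
    ∀ A' B' : Set (World σ'),
      acceptsCond (marg κ₁ σ') A' B' ↔ acceptsCond (marg κ₂ σ') A' B' := by
  intro A' B'
  unfold acceptsCond
  rw [rank_marg, rank_marg, rank_marg, rank_marg,
    Set.preimage_inter, Set.preimage_inter, Set.preimage_compl]
  exact hequiv _ _
end

section
/- If κ₁ ≅ κ₂ are equivalent OCFs over Σ' and Σ' ⊆ Σ, then their liftings to Σ are equivalent: κ₁↑Σ ≅ κ₂↑Σ (they accept exactly the same conditionals over propositions of Ω_Σ). -/
/-- Lifting of an OCF `μ` over `σ' ⊆ σ` to the full signature `σ`: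
`μ↑σ(ω) = μ(π(ω))`. -/
def liftOCF {σ : Type*} (σ' : Set σ) (μ : World σ' → ℕ) : World σ → ℕ :=
  fun ω => μ (restrict σ' ω)

lemma rank_mono {α : Type*} (κ : α → ℕ) {A B : Set α} (h : A ⊆ B) :
    rank κ B ≤ rank κ A := by
  refine le_iInf₂ fun ω hω => ?_
  exact biInf_le _ (h hω)

lemma rank_union {α : Type*} (κ : α → ℕ) (A B : Set α) :
    rank κ (A ∪ B) = rank κ A ⊓ rank κ B := by
  simp only [rank]; exact iInf_union

lemma rank_image {σ : Type*} (σ' : Set σ) (μ : World σ' → ℕ) (A : Set (World σ)) :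
    rank (liftOCF σ' μ) A = rank μ (restrict σ' '' A) := by
  rw [show rank μ (restrict σ' '' A) = ⨅ ω ∈ A, ((μ (restrict σ' ω) : ℕ∞)) from iInf_image]
  rfl

lemma rank_diff_lt {α : Type*} (κ : α → ℕ) (S T : Set α) :
    rank κ S < rank κ T ↔ rank κ (S \ T) < rank κ T := by
  constructor
  · intro h
    have hS : S = (S \ T) ∪ (S ∩ T) := by ext x; simp [Set.mem_diff]
    have h2 : rank κ S = rank κ (S \ T) ⊓ rank κ (S ∩ T) := by
      conv_lhs => rw [hS]
      exact rank_union κ _ _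
    have h3 : rank κ T ≤ rank κ (S ∩ T) := rank_mono κ Set.inter_subset_right
    have : rank κ (S \ T) ⊓ rank κ (S ∩ T) < rank κ T := h2 ▸ h
    rcases lt_or_ge (rank κ (S \ T)) (rank κ (S ∩ T)) with h4 | h4
    · simpa [inf_eq_left.2 h4.le] using this
    · exact absurd (this.trans_le h3) (by simp [inf_eq_right.2 h4])
  · intro h
    exact lt_of_le_of_lt (rank_mono κ Set.diff_subset) h

lemma rank_lt_iff_of_equiv {α : Type*} (μ₁ μ₂ : α → ℕ)
    (hequiv : ∀ A B : Set α, acceptsCond μ₁ A B ↔ acceptsCond μ₂ A B)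
    (S T : Set α) : rank μ₁ S < rank μ₁ T ↔ rank μ₂ S < rank μ₂ T := by
  have key : ∀ μ : α → ℕ,
      acceptsCond μ ((S \ T) ∪ T) (S \ T) ↔ rank μ S < rank μ T := by
    intro μ
    have hAB : ((S \ T) ∪ T) ∩ (S \ T) = S \ T := by
      ext x; simp [Set.mem_diff]; tauto
    have hAB' : ((S \ T) ∪ T) ∩ (S \ T)ᶜ = T := by
      ext x; simp [Set.mem_diff]; tauto
    rw [acceptsCond, hAB, hAB', ← rank_diff_lt]
  rw [← key μ₁, ← key μ₂]
  exact hequiv _ _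

/-- Equivalent OCFs over `σ'` have equivalent liftings to `σ`. -/
theorem stmt6 {σ : Type*} [Fintype σ] [Nonempty σ] (σ' : Set σ)
    (μ₁ μ₂ : World σ' → ℕ) (h₁ : ∃ ω', μ₁ ω' = 0) (h₂ : ∃ ω', μ₂ ω' = 0)
    (hequiv : ∀ A B : Set (World σ'), acceptsCond μ₁ A B ↔ acceptsCond μ₂ A B) :
    ∀ A B : Set (World σ),
      acceptsCond (liftOCF σ' μ₁) A B ↔ acceptsCond (liftOCF σ' μ₂) A B := by
  intro A B
  unfold acceptsCond
  rw [rank_image, rank_image, rank_image, rank_image]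
  exact rank_lt_iff_of_equiv μ₁ μ₂ hequiv _ _
end

section
/- Let κ be an OCF over Σ and let Σ', Σ'' ⊆ Σ. Then marginalizing the lifted marginalization (κ↓Σ')↑Σ to Σ'' equals the lifting to Σ'' of the marginalization of κ to Σ'∩Σ'': ((κ↓Σ')↑Σ)↓Σ'' = (κ↓(Σ'∩Σ''))↑Σ''. -/
/-- Marginalization of a ranking function along a map `f`. -/
noncomputable def margAlong {α β : Type*} (κ : α → ℕ) (f : α → β) : β → ℕ :=
  fun b => sInf (κ '' (f ⁻¹' {b}))

/-- Restriction of a world over a subsignature `σ'` to a further subsignature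
`σ₀ ⊆ σ'`. -/
def restrict₂ {σ : Type*} (σ' σ₀ : Set σ) (hsub : σ₀ ⊆ σ') (ω' : World σ') :
    World σ₀ := fun a => ω' ⟨a.val, hsub a.prop⟩

/-- Lifting of an OCF over `σ₀ ⊆ σ''` to the subsignature `σ''`. -/
def liftOCF₂ {σ : Type*} (σ'' σ₀ : Set σ) (hsub : σ₀ ⊆ σ'') (μ : World σ₀ → ℕ) :
    World σ'' → ℕ := fun ω'' => μ (restrict₂ σ'' σ₀ hsub ω'')

/-- Marginalizing the lifted marginalization `(κ↓σ')↑σ` to `σ''` equals the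
lifting to `σ''` of the marginalization of `κ` to `σ' ∩ σ''`. -/
theorem stmt8 {σ : Type*} [Fintype σ] [Nonempty σ]
    (κ : World σ → ℕ) (h : ∃ ω, κ ω = 0) (σ' σ'' : Set σ) :
    margAlong (liftOCF σ' (margAlong κ (restrict σ'))) (restrict σ'') =
      liftOCF₂ σ'' (σ' ∩ σ'') Set.inter_subset_right
        (margAlong κ (restrict (σ' ∩ σ''))) := by
  classical
  funext ω''
  -- extension of ω'' to a full world
  set ext : World σ := fun a => if ha : a ∈ σ'' then ω'' ⟨a, ha⟩ else false with hext
  have hextr : restrict σ'' ext = ω'' := by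
    funext a; simp [restrict, hext, a.prop]
  apply le_antisymm
  · -- LHS ≤ RHS
    -- RHS set is nonempty
    have hne : (κ '' (restrict (σ' ∩ σ'') ⁻¹'
        {restrict₂ σ'' (σ' ∩ σ'') Set.inter_subset_right ω''})).Nonempty := by
      refine ⟨κ ext, ⟨ext, ?_, rfl⟩⟩
      funext a
      simp [restrict, restrict₂, hext, a.prop.2]
    obtain ⟨ω₁, hω₁, hκω₁⟩ := Nat.sInf_mem hne
    simp only [Set.mem_preimage, Set.mem_singleton_iff] at hω₁
    -- mix world: agrees with ω'' on σ'', with ω₁ elsewhere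
    set ωm : World σ := fun a => if ha : a ∈ σ'' then ω'' ⟨a, ha⟩ else ω₁ a with hωm
    have hm'' : restrict σ'' ωm = ω'' := by
      funext a; simp [restrict, hωm, a.prop]
    have hm' : restrict σ' ωm = restrict σ' ω₁ := by
      funext a
      simp only [restrict, hωm]
      by_cases ha : a.val ∈ σ''
      · simp only [ha, dif_pos]
        have := congrFun hω₁ ⟨a.val, ⟨a.prop, ha⟩⟩
        simpa [restrict, restrict₂] using this.symm
      · simp [ha]
    calc margAlong (liftOCF σ' (margAlong κ (restrict σ'))) (restrict σ'') ω''
        ≤ liftOCF σ' (margAlong κ (restrict σ')) ωm := by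
          apply Nat.sInf_le
          exact ⟨ωm, hm'', rfl⟩
      _ ≤ κ ω₁ := by
          apply Nat.sInf_le
          exact ⟨ω₁, hm'.symm, rfl⟩
      _ = _ := hκω₁
  · -- RHS ≤ LHS
    have hne : ((liftOCF σ' (margAlong κ (restrict σ'))) ''
        (restrict σ'' ⁻¹' {ω''})).Nonempty := ⟨_, ext, hextr, rfl⟩
    obtain ⟨ω, hω, hωval⟩ := Nat.sInf_mem hne
    simp only [Set.mem_preimage, Set.mem_singleton_iff] at hω
    simp only [margAlong]
    rw [← hωval]
    have hne2 : (κ '' (restrict σ' ⁻¹' {restrict σ' ω})).Nonempty := ⟨κ ω, ω, rfl, rfl⟩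
    obtain ⟨ω₁, hω₁, hκω₁⟩ := Nat.sInf_mem hne2
    simp only [Set.mem_preimage, Set.mem_singleton_iff] at hω₁
    have : liftOCF σ' (margAlong κ (restrict σ')) ω = κ ω₁ := hκω₁.symm
    rw [this]
    apply Nat.sInf_le
    refine ⟨ω₁, ?_, rfl⟩
    simp only [Set.mem_preimage, Set.mem_singleton_iff]
    funext a
    have h1 := congrFun hω₁ ⟨a.val, a.prop.1⟩
    have h2 := congrFun hω ⟨a.val, a.prop.2⟩
    simp only [restrict, restrict₂] at *
    rw [h1, h2]
end

section
/- Let κ be an OCF over Σ, let A ⊆ Ω_Σ be a contingent proposition, and let γ be an integer with γ ≥ κ(Aᶜ) − κ(A). Then the c-contraction κ −_γ A is well defined as an OCF: (κ −_γ A)(ω) ≥ 0 for every world ω, min{(κ −_γ A)(ω) : ω ∈ Aᶜ} = 0 (and hence the minimum over all worlds is 0), and κ −_γ A does not accept A, i.e., it is not the case that (κ −_γ A)(A) < (κ −_γ A)(Aᶜ). Hence c-contractions satisfy the success postulate (AGMes-3) for contraction. -/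
/-- The natural-number rank of a proposition (minimum of `κ` over the models,
for nonempty propositions). -/
noncomputable def nrank {α : Type*} (κ : α → ℕ) (A : Set α) : ℕ := sInf (κ '' A)

/-- The c-contraction of `κ` by `A` with impact `γ` (an integer-valued
function): `(κ −_γ A)(ω) = κ(ω) − κ(Aᶜ) + γ` if `ω ∈ A`, and
`(κ −_γ A)(ω) = κ(ω) − κ(Aᶜ)` otherwise. -/
noncomputable def ccontr {σ : Type*} (κ : World σ → ℕ) (A : Set (World σ)) (γ : ℤ) :
    World σ → ℤ :=
  fun ω => (κ ω : ℤ) - (nrank κ Aᶜ : ℤ) + A.indicator (fun _ => γ) ω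

/-- The (integer) rank of a proposition `S` under an integer-valued ranking
function: the infimum of the values over `S`. -/
noncomputable def zrank {σ : Type*} (f : World σ → ℤ) (S : Set (World σ)) : ℤ :=
  sInf (f '' S)

lemma nrank_le {α : Type*} (κ : α → ℕ) {A : Set α} {ω : α} (hω : ω ∈ A) :
    nrank κ A ≤ κ ω :=
  Nat.sInf_le ⟨ω, hω, rfl⟩

/-- For a contingent `A` and `γ ≥ κ(Aᶜ) − κ(A)`, the c-contraction `κ −_γ A`
is a well-defined OCF: nonnegative, with minimum `0` attained on `Aᶜ` (hence
over all worlds), and it does not accept `A` (success postulate (AGMes-3)). -/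
theorem stmt10 {σ : Type*} [Fintype σ] [Nonempty σ]
    (κ : World σ → ℕ) (h : ∃ ω, κ ω = 0)
    (A : Set (World σ)) (hA : A.Nonempty) (hAc : Aᶜ.Nonempty)
    (γ : ℤ) (hγ : (nrank κ Aᶜ : ℤ) - (nrank κ A : ℤ) ≤ γ) :
    (∀ ω, 0 ≤ ccontr κ A γ ω) ∧
    zrank (ccontr κ A γ) Aᶜ = 0 ∧
    zrank (ccontr κ A γ) Set.univ = 0 ∧
    ¬ (zrank (ccontr κ A γ) A < zrank (ccontr κ A γ) Aᶜ) := by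
  have hnonneg : ∀ ω, 0 ≤ ccontr κ A γ ω := by
    intro ω
    unfold ccontr
    by_cases hω : ω ∈ A
    · rw [Set.indicator_of_mem hω]
      have h1 : (nrank κ A : ℤ) ≤ (κ ω : ℤ) := by exact_mod_cast nrank_le κ hω
      linarith
    · rw [Set.indicator_of_notMem hω]
      have h1 : (nrank κ Aᶜ : ℤ) ≤ (κ ω : ℤ) := by exact_mod_cast nrank_le κ hω
      linarith
  -- witness on Aᶜ attaining 0
  obtain ⟨ω₀, hω₀, hκω₀⟩ :
      nrank κ Aᶜ ∈ κ '' Aᶜ := Nat.sInf_mem (hAc.image κ)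
  have hzero : ccontr κ A γ ω₀ = 0 := by
    unfold ccontr
    rw [Set.indicator_of_notMem (by simpa using hω₀)]
    rw [hκω₀]; ring
  have hrank_zero : ∀ S : Set (World σ), ω₀ ∈ S → zrank (ccontr κ A γ) S = 0 := by
    intro S hS
    apply le_antisymm
    · have := csInf_le (s := ccontr κ A γ '' S) (a := ccontr κ A γ ω₀)
        ⟨0, by rintro x ⟨w, _, rfl⟩; exact hnonneg w⟩ ⟨ω₀, hS, rfl⟩
      rw [hzero] at this; exact this
    · exact le_csInf ⟨_, ⟨ω₀, hS, rfl⟩⟩ (by rintro x ⟨w, _, rfl⟩; exact hnonneg w)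
  have hAc0 : zrank (ccontr κ A γ) Aᶜ = 0 := hrank_zero _ hω₀
  refine ⟨hnonneg, hAc0, hrank_zero _ (Set.mem_univ _), ?_⟩
  rw [hAc0]
  intro hlt
  have : (0:ℤ) ≤ zrank (ccontr κ A γ) A :=
    le_csInf ⟨_, ⟨hA.choose, hA.choose_spec, rfl⟩⟩ (by rintro x ⟨w, _, rfl⟩; exact hnonneg w)
  omega
end

section
/- Let κ be an OCF over Σ and let Σ₁ ⊆ Σ' ⊆ Σ. Then marginalizing the lifted marginalization (κ↓Σ')↑Σ to Σ₁ returns the marginalization of κ to Σ₁: ((κ↓Σ')↑Σ)↓Σ₁ = κ↓Σ₁. In particular, forgetting by lifted OCF-marginalization satisfies Epistemic Persistence (EP): if Σ = Σ₁ ⊔ Σ₂ and the forgotten proposition depends only on atoms in Σ₂ (so that Σ₁ ⊆ Σ' for Σ' the retained subsignature), the marginalization to Σ₁ is unchanged by the forgetting. -/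
lemma restrict_restrict {σ : Type*} (σ₁ σ' : Set σ) (hsub : σ₁ ⊆ σ')
    (ω ω' : World σ) (h : restrict σ' ω = restrict σ' ω') :
    restrict σ₁ ω = restrict σ₁ ω' := by
  funext a
  have := congrFun h ⟨a.val, hsub a.2⟩
  exact this

/-- For `σ₁ ⊆ σ' ⊆ σ`, marginalizing the lifted marginalization `(κ↓σ')↑σ` to
`σ₁` returns `κ↓σ₁`; hence forgetting by lifted OCF-marginalization satisfies
Epistemic Persistence (EP). -/
theorem stmt13 {σ : Type*} [Fintype σ] [Nonempty σ]
    (κ : World σ → ℕ) (h : ∃ ω, κ ω = 0)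
    (σ₁ σ' : Set σ) (hsub : σ₁ ⊆ σ') :
    margAlong (liftOCF σ' (margAlong κ (restrict σ'))) (restrict σ₁) =
      margAlong κ (restrict σ₁) := by
  classical
  funext ω₁
  -- an extension of ω₁ to σ
  set ωext : World σ := fun a => if ha : a ∈ σ₁ then ω₁ ⟨a, ha⟩ else false with hωext
  have hre : restrict σ₁ ωext = ω₁ := by
    funext a
    simp [restrict, hωext, a.2]
  apply le_antisymm
  · -- LHS ≤ RHS
    have hne : (κ '' (restrict σ₁ ⁻¹' {ω₁})).Nonempty := ⟨κ ωext, ⟨ωext, hre, rfl⟩⟩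
    obtain ⟨ω, hω, hκω⟩ := Nat.sInf_mem hne
    simp only [margAlong]
    rw [← hκω]
    calc sInf (liftOCF σ' (margAlong κ (restrict σ')) '' (restrict σ₁ ⁻¹' {ω₁}))
        ≤ liftOCF σ' (margAlong κ (restrict σ')) ω := Nat.sInf_le ⟨ω, hω, rfl⟩
      _ ≤ κ ω := Nat.sInf_le ⟨ω, rfl, rfl⟩
  · -- RHS ≤ LHS
    have hne : (liftOCF σ' (margAlong κ (restrict σ')) '' (restrict σ₁ ⁻¹' {ω₁})).Nonempty :=
      ⟨_, ⟨ωext, hre, rfl⟩⟩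
    apply le_csInf hne
    rintro b ⟨ω, hω, rfl⟩
    have hne2 : (κ '' (restrict σ' ⁻¹' {restrict σ' ω})).Nonempty := ⟨κ ω, ⟨ω, rfl, rfl⟩⟩
    obtain ⟨ω', hω', hκω'⟩ := Nat.sInf_mem hne2
    show sInf _ ≤ margAlong κ (restrict σ') (restrict σ' ω)
    simp only [margAlong]
    rw [← hκω']
    apply Nat.sInf_le
    refine ⟨ω', ?_, rfl⟩
    have h2 := restrict_restrict σ₁ σ' hsub ω' ω hω'
    simpa [Set.mem_preimage, h2] using hω
end

section
/- If κ₁ ≅ κ₂ are equivalent OCFs over Σ and A ⊆ Ω_Σ is a nonempty proposition, then the conditionalizations κ₁|A and κ₂|A are equivalent, i.e., for all propositions B, C ⊆ A, κ₁|A accepts the conditional (C|B) iff κ₂|A accepts (C|B). Hence forgetting by OCF-conditionalization satisfies the (strong) Equivalence postulate (E). -/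
/-- Conditionalization `κ|A` of an OCF `κ` by a (nonempty) proposition `A`. -/
noncomputable def condOCF {σ : Type*} (κ : World σ → ℕ) (A : Set (World σ)) : ↥A → ℕ :=
  fun ω => κ ω.val - nrank κ A

lemma rank_eq_nrank {α : Type*} (κ : α → ℕ) {S : Set α} (hS : S.Nonempty) :
    rank κ S = (nrank κ S : ℕ∞) := by
  have hmem := Nat.sInf_mem (hS.image κ)
  obtain ⟨ω, hω, hωe⟩ := (Set.mem_image _ _ _).1 hmem
  apply le_antisymm
  · calc rank κ S ≤ (κ ω : ℕ∞) := iInf₂_le ω hω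
      _ = _ := by rw [hωe]; rfl
  · refine le_iInf₂ fun x hx => ?_
    exact_mod_cast Nat.sInf_le (Set.mem_image_of_mem κ hx)

lemma sInf_sub_image {T : Set ℕ} (hT : T.Nonempty) (n : ℕ) :
    sInf ((· - n) '' T) = sInf T - n := by
  apply le_antisymm
  · exact Nat.sInf_le ⟨sInf T, Nat.sInf_mem hT, rfl⟩
  · apply le_csInf (hT.image _)
    rintro _ ⟨x, hx, rfl⟩
    exact Nat.sub_le_sub_right (Nat.sInf_le hx) n

lemma rank_cond {σ : Type*} (κ : World σ → ℕ) (A : Set (World σ))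
    {S : Set (World σ)} (hSA : S ⊆ A) :
    rank (condOCF κ A) (Subtype.val ⁻¹' S) + (nrank κ A : ℕ∞) = rank κ S := by
  rcases S.eq_empty_or_nonempty with rfl | hS
  · have h1 : (Subtype.val ⁻¹' (∅ : Set (World σ)) : Set ↥A) = ∅ := by simp
    have h2 : rank (condOCF κ A) (∅ : Set ↥A) = ⊤ := by simp [rank]
    have h3 : rank κ (∅ : Set (World σ)) = ⊤ := by simp [rank]
    rw [h1, h2, h3, top_add]
  · have hS' : (Subtype.val ⁻¹' S : Set ↥A).Nonempty := by
      obtain ⟨s, hs⟩ := hS; exact ⟨⟨s, hSA hs⟩, hs⟩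
    rw [rank_eq_nrank _ hS, rank_eq_nrank _ hS']
    have himg : condOCF κ A '' (Subtype.val ⁻¹' S) = (· - nrank κ A) '' (κ '' S) := by
      ext x
      constructor
      · rintro ⟨ω, hω, rfl⟩; exact ⟨κ ω.val, ⟨ω.val, hω, rfl⟩, rfl⟩
      · rintro ⟨_, ⟨s, hs, rfl⟩, rfl⟩; exact ⟨⟨s, hSA hs⟩, hs, rfl⟩
    have hle : nrank κ A ≤ nrank κ S := by
      apply le_csInf (hS.image κ)
      rintro _ ⟨s, hs, rfl⟩
      exact Nat.sInf_le ⟨s, hSA hs, rfl⟩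
    have hn : nrank (condOCF κ A) (Subtype.val ⁻¹' S) = nrank κ S - nrank κ A := by
      rw [nrank, himg, sInf_sub_image (hS.image κ)]; rfl
    rw [hn]
    exact_mod_cast congrArg (Nat.cast : ℕ → ℕ∞) (Nat.sub_add_cancel hle)

/-- If `κ₁ ≅ κ₂` and `A` is nonempty, then the conditionalizations `κ₁|A` and
`κ₂|A` accept exactly the same conditionals over propositions `B, C ⊆ A`;
hence forgetting by OCF-conditionalization satisfies the Equivalence
postulate (E). -/
theorem stmt14 {σ : Type*} [Fintype σ] [Nonempty σ]
    (κ₁ κ₂ : World σ → ℕ) (h₁ : ∃ ω, κ₁ ω = 0) (h₂ : ∃ ω, κ₂ ω = 0)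
    (hequiv : ∀ A B : Set (World σ), acceptsCond κ₁ A B ↔ acceptsCond κ₂ A B)
    (A : Set (World σ)) (hA : A.Nonempty) :
    ∀ B C : Set (World σ), B ⊆ A → C ⊆ A →
      (acceptsCond (condOCF κ₁ A) (Subtype.val ⁻¹' B) (Subtype.val ⁻¹' C) ↔
        acceptsCond (condOCF κ₂ A) (Subtype.val ⁻¹' B) (Subtype.val ⁻¹' C)) := by
  intro B C hB hC
  have key : ∀ κ : World σ → ℕ,
      acceptsCond (condOCF κ A) (Subtype.val ⁻¹' B) (Subtype.val ⁻¹' C) ↔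
        acceptsCond κ B C := by
    intro κ
    have e1 : (Subtype.val ⁻¹' B : Set ↥A) ∩ (Subtype.val ⁻¹' C) =
        Subtype.val ⁻¹' (B ∩ C) := rfl
    have e2 : (Subtype.val ⁻¹' B : Set ↥A) ∩ (Subtype.val ⁻¹' C)ᶜ =
        Subtype.val ⁻¹' (B ∩ Cᶜ) := rfl
    unfold acceptsCond
    rw [e1, e2,
      ← rank_cond κ A (fun x hx => hB hx.1),
      ← rank_cond κ A (fun x hx => hB hx.1)]
    exact (WithTop.add_lt_add_iff_right (ENat.coe_ne_top _)).symm
  rw [key κ₁, key κ₂]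
  exact hequiv B C
end

section
/- Let κ be an OCF over Σ and let A, C ⊆ Ω_Σ be propositions such that A, C and A ∩ C are all contingent. For X ∈ {A, C, A ∩ C} let γ_X be an integer with γ_X > κ(Xᶜ) − κ(X) (so each c-contraction κ −_{γ_X} X is a c-revocation). Then the most plausible worlds after forgetting the conjunction satisfy: if κ(Aᶜ) < κ(Cᶜ) then (κ −_{γ_{A∩C}} (A ∩ C))⁻¹(0) = (κ −_{γ_A} A)⁻¹(0); if κ(Cᶜ) < κ(Aᶜ) then (κ −_{γ_{A∩C}} (A ∩ C))⁻¹(0) = (κ −_{γ_C} C)⁻¹(0); and if κ(Aᶜ) = κ(Cᶜ) then (κ −_{γ_{A∩C}} (A ∩ C))⁻¹(0) = (κ −_{γ_A} A)⁻¹(0) ∪ (κ −_{γ_C} C)⁻¹(0). Hence c-revocations satisfy Conjunctive Factoring (CF). -/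
lemma nrank_mem {α : Type*} (κ : α → ℕ) {A : Set α} (hA : A.Nonempty) :
    ∃ ω ∈ A, κ ω = nrank κ A := by
  obtain ⟨ω, hω, hκ⟩ := Nat.sInf_mem (hA.image κ)
  exact ⟨ω, hω, hκ⟩

lemma ccontr_zero {σ : Type*} (κ : World σ → ℕ) (A : Set (World σ)) (γ : ℤ)
    (hγ : (nrank κ Aᶜ : ℤ) - (nrank κ A : ℤ) < γ) :
    (ccontr κ A γ) ⁻¹' {0} = {ω | ω ∈ Aᶜ ∧ κ ω = nrank κ Aᶜ} := by
  ext ω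
  simp only [Set.mem_preimage, Set.mem_singleton_iff, ccontr, Set.mem_setOf_eq,
    Set.mem_compl_iff]
  by_cases hω : ω ∈ A
  · rw [Set.indicator_of_mem hω]
    have h1 : (nrank κ A : ℤ) ≤ κ ω := by exact_mod_cast nrank_le κ hω
    constructor
    · intro h0; omega
    · rintro ⟨hc, -⟩; exact absurd hω hc
  · rw [Set.indicator_of_notMem hω]
    have h2 : (nrank κ Aᶜ : ℤ) ≤ κ ω := by exact_mod_cast nrank_le κ hω
    constructor
    · intro h0
      refine ⟨hω, ?_⟩
      exact_mod_cast (by omega : (κ ω : ℤ) = nrank κ Aᶜ)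
    · rintro ⟨-, he⟩
      have : (κ ω : ℤ) = nrank κ Aᶜ := by exact_mod_cast he
      omega

lemma nrank_compl_inter {α : Type*} (κ : α → ℕ) {A C : Set α}
    (hA : Aᶜ.Nonempty) (hC : Cᶜ.Nonempty) :
    nrank κ (A ∩ C)ᶜ = min (nrank κ Aᶜ) (nrank κ Cᶜ) := by
  rw [Set.compl_inter]
  apply le_antisymm
  · rcases le_total (nrank κ Aᶜ) (nrank κ Cᶜ) with hle | hle
    · rw [min_eq_left hle]
      obtain ⟨ω, hω, hk⟩ := nrank_mem κ hA
      rw [← hk]; exact nrank_le κ (Or.inl hω)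
    · rw [min_eq_right hle]
      obtain ⟨ω, hω, hk⟩ := nrank_mem κ hC
      rw [← hk]; exact nrank_le κ (Or.inr hω)
  · obtain ⟨ω, hω, hk⟩ := nrank_mem κ (hA.mono Set.subset_union_left)
    rw [← hk]
    rcases hω with hω | hω
    · exact le_trans (min_le_left _ _) (nrank_le κ hω)
    · exact le_trans (min_le_right _ _) (nrank_le κ hω)

/-- Conjunctive Factoring (CF) for c-revocations: when `A`, `C` and `A ∩ C`
are contingent and all three contractions are c-revocations, the most
plausible worlds after forgetting `A ∩ C` are those after forgetting `A`,
after forgetting `C`, or their union, according to the comparison of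
`κ(Aᶜ)` and `κ(Cᶜ)`. -/
theorem stmt18 {σ : Type*} [Fintype σ] [Nonempty σ]
    (κ : World σ → ℕ) (h : ∃ ω, κ ω = 0)
    (A C : Set (World σ))
    (hA : A.Nonempty) (hAc : Aᶜ.Nonempty)
    (hC : C.Nonempty) (hCc : Cᶜ.Nonempty)
    (hAC : (A ∩ C).Nonempty) (hACc : (A ∩ C)ᶜ.Nonempty)
    (γA γC γAC : ℤ)
    (hγA : (nrank κ Aᶜ : ℤ) - (nrank κ A : ℤ) < γA)
    (hγC : (nrank κ Cᶜ : ℤ) - (nrank κ C : ℤ) < γC)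
    (hγAC : (nrank κ (A ∩ C)ᶜ : ℤ) - (nrank κ (A ∩ C) : ℤ) < γAC) :
    (nrank κ Aᶜ < nrank κ Cᶜ →
      (ccontr κ (A ∩ C) γAC) ⁻¹' {0} = (ccontr κ A γA) ⁻¹' {0}) ∧
    (nrank κ Cᶜ < nrank κ Aᶜ →
      (ccontr κ (A ∩ C) γAC) ⁻¹' {0} = (ccontr κ C γC) ⁻¹' {0}) ∧
    (nrank κ Aᶜ = nrank κ Cᶜ →
      (ccontr κ (A ∩ C) γAC) ⁻¹' {0} =
        (ccontr κ A γA) ⁻¹' {0} ∪ (ccontr κ C γC) ⁻¹' {0}) := by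
  rw [ccontr_zero κ A γA hγA, ccontr_zero κ C γC hγC,
    ccontr_zero κ (A ∩ C) γAC hγAC]
  have hmin := nrank_compl_inter κ hAc hCc
  have hmin' : nrank κ (Aᶜ ∪ Cᶜ) = min (nrank κ Aᶜ) (nrank κ Cᶜ) := by
    rw [← Set.compl_inter]; exact hmin
  refine ⟨?_, ?_, ?_⟩
  · intro hlt
    ext ω
    simp only [Set.mem_setOf_eq, Set.mem_compl_iff, Set.compl_inter, Set.mem_union,
      hmin, hmin', min_eq_left hlt.le]
    constructor
    · rintro ⟨hω, he⟩
      refine ⟨?_, he⟩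
      rcases hω with hω | hω
      · exact hω
      · have := nrank_le (A := Cᶜ) κ hω; omega
    · rintro ⟨hω, he⟩
      exact ⟨Or.inl hω, he⟩
  · intro hlt
    ext ω
    simp only [Set.mem_setOf_eq, Set.mem_compl_iff, Set.compl_inter, Set.mem_union,
      hmin, hmin', min_eq_right hlt.le]
    constructor
    · rintro ⟨hω, he⟩
      refine ⟨?_, he⟩
      rcases hω with hω | hω
      · have := nrank_le (A := Aᶜ) κ hω; omega
      · exact hω
    · rintro ⟨hω, he⟩
      exact ⟨Or.inr hω, he⟩
  · intro heq
    ext ω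
    simp only [Set.mem_setOf_eq, Set.mem_compl_iff, Set.compl_inter, Set.mem_union,
      hmin, hmin', heq, min_self]
    constructor
    · rintro ⟨hω, he⟩
      rcases hω with hω | hω
      · exact Or.inl ⟨hω, by omega⟩
      · exact Or.inr ⟨hω, he⟩
    · rintro (⟨hω, he⟩ | ⟨hω, he⟩)
      · exact ⟨Or.inl hω, by omega⟩
      · exact ⟨Or.inr hω, he⟩
end

section
/- Let κ₁ be an OCF over Σ, let q be a positive rational number, and let κ₂ be the OCF with κ₂(ω) = q · κ₁(ω) for all worlds ω (assumed ℕ-valued), so that κ₁ and κ₂ are linearly equivalent. Let A ⊆ Ω_Σ be a contingent proposition, let γ₁ be an integer with γ₁ ≥ κ₁(Aᶜ) − κ₁(A), and let γ₂ = q · γ₁ (assumed an integer). Then γ₂ ≥ κ₂(Aᶜ) − κ₂(A), and the resulting c-contractions satisfy (κ₂ −_{γ₂} A)(ω) = q · (κ₁ −_{γ₁} A)(ω) for all worlds ω; that is, c-contractions induced by selection strategies satisfying the scaling condition σ(q·κ, A) = q·σ(κ, A) preserve linear equivalence (postulate (LE^ocf)). -/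
lemma nrank_scale {α : Type*} (κ₁ κ₂ : α → ℕ) (q : ℚ) (hq : 0 < q)
    (hmul : ∀ ω, (κ₂ ω : ℚ) = q * (κ₁ ω : ℚ)) (B : Set α) (hB : B.Nonempty) :
    (nrank κ₂ B : ℚ) = q * (nrank κ₁ B : ℚ) := by
  have hne : (κ₁ '' B).Nonempty := hB.image _
  have hmem := Nat.sInf_mem hne
  obtain ⟨ω, hω, hωeq⟩ := hmem
  have h2 : nrank κ₂ B = κ₂ ω := by
    apply le_antisymm
    · exact Nat.sInf_le ⟨ω, hω, rfl⟩
    · apply le_csInf (hB.image _)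
      rintro b ⟨ω', hω', rfl⟩
      have h1 : κ₁ ω ≤ κ₁ ω' := hωeq ▸ Nat.sInf_le ⟨ω', hω', rfl⟩
      have : (κ₂ ω : ℚ) ≤ (κ₂ ω' : ℚ) := by
        rw [hmul, hmul]
        exact mul_le_mul_of_nonneg_left (by exact_mod_cast h1) hq.le
      exact_mod_cast this
  rw [h2, hmul, nrank, hωeq]

/-- Linear Equivalence (LE^ocf) for c-contractions with scaling selection
strategies: if `κ₂ = q · κ₁` pointwise for a positive rational `q`, `A` is
contingent, `γ₁` is an admissible impact for `κ₁`, and `γ₂ = q · γ₁`, then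
`γ₂` is an admissible impact for `κ₂` and `κ₂ −_{γ₂} A = q · (κ₁ −_{γ₁} A)`
pointwise. -/
theorem stmt19 {σ : Type*} [Fintype σ] [Nonempty σ]
    (κ₁ κ₂ : World σ → ℕ) (h₁ : ∃ ω, κ₁ ω = 0)
    (q : ℚ) (hq : 0 < q) (hmul : ∀ ω : World σ, (κ₂ ω : ℚ) = q * (κ₁ ω : ℚ))
    (A : Set (World σ)) (hA : A.Nonempty) (hAc : Aᶜ.Nonempty)
    (γ₁ γ₂ : ℤ)
    (hγ₁ : (nrank κ₁ Aᶜ : ℤ) - (nrank κ₁ A : ℤ) ≤ γ₁)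
    (hγ₂ : (γ₂ : ℚ) = q * (γ₁ : ℚ)) :
    ((nrank κ₂ Aᶜ : ℤ) - (nrank κ₂ A : ℤ) ≤ γ₂) ∧
    (∀ ω : World σ, (ccontr κ₂ A γ₂ ω : ℚ) = q * (ccontr κ₁ A γ₁ ω : ℚ)) := by
  have hrc : (nrank κ₂ Aᶜ : ℚ) = q * (nrank κ₁ Aᶜ : ℚ) :=
    nrank_scale κ₁ κ₂ q hq hmul Aᶜ hAc
  have hrA : (nrank κ₂ A : ℚ) = q * (nrank κ₁ A : ℚ) :=
    nrank_scale κ₁ κ₂ q hq hmul A hA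
  constructor
  · have : (nrank κ₂ Aᶜ : ℚ) - (nrank κ₂ A : ℚ) ≤ (γ₂ : ℚ) := by
      rw [hrc, hrA, hγ₂, ← mul_sub]
      apply mul_le_mul_of_nonneg_left _ hq.le
      exact_mod_cast hγ₁
    exact_mod_cast this
  · intro ω
    simp only [ccontr]
    by_cases h : ω ∈ A
    · rw [Set.indicator_of_mem h, Set.indicator_of_mem h]
      push_cast
      rw [hmul, hrc, hγ₂]
      ring
    · rw [Set.indicator_of_notMem h, Set.indicator_of_notMem h]
      push_cast
      rw [hmul, hrc]
      ring
end
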